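/- Let (Q,𝔫) be a regular local ring of dimension c ≥ 2 with algebraically closed residue field k = Q/𝔫, let f₁,…,f_{c-1}, g be a Q-regular sequence with f_i ∈ 𝔫² and g ∈ 𝔫, and set A = Q/(f₁,…,f_{c-1}, g^r) with r ≥ 2. Then for every 1 ≤ s ≤ r−1 and every l ≥ 0, Tor_l^A(A/(g^s A), k) is a one-dimensional k-vector space, i.e., all Betti numbers of the A-module A/(g^s A) are equal to 1. -/

import Mathlib

open CategoryTheory

noncomputable def moduleLength (R M : Type*) [Ring R] [AddCommGroup M] [Module R M] : ℕ∞ :=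
  WithBot.unbotD 0 (Order.krullDim (Submodule R M))

/-!
Write `a = gˢ` and `b = g^(r-s)` in `A`. Since `g` is a nonzerodivisor modulo `(f)`, the
annihilator of `a` is `(b)` and that of `b` is `(a)`, so `0 → A/(b) → A → A/(a) → 0`, the first
map being multiplication by `a`, is exact, and so is the same sequence with `a` and `b`
exchanged. In the long exact sequence of `Tor(-, k)`, `Tor_{n+1}(A, k)` vanishes and
`Tor_0(A/(b), k) → Tor_0(A, k)` is multiplication by `a ∈ 𝔫`, hence zero, so the connecting map is
an isomorphism `Tor_{n+1}(A/(a), k) ≅ Tor_n(A/(b), k)`. Alternating between `a` and `b` brings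
every `Tor_l(A/(gˢ), k)` down to `Tor_0 = A/(a) ⊗ k = k`.
-/

open Limits MonoidalCategory

universe u

lemma moduleLength_eq_length (R M : Type*) [Ring R] [AddCommGroup M] [Module R M] :
    moduleLength R M = Module.length R M := by
  rw [moduleLength, ← Module.coe_length, WithBot.unbotD_coe]

lemma CategoryTheory.ShortComplex.ShortExact.isIso_δ_of_homologyMap_eq_zero
    {C ι : Type*} [Category* C] [Abelian C] {c : ComplexShape ι}
    {S : ShortComplex (HomologicalComplex C c)} (hS : S.ShortExact) (i j : ι) (hij : c.Rel i j)
    (hg : HomologicalComplex.homologyMap S.g i = 0)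
    (hf : HomologicalComplex.homologyMap S.f j = 0) : IsIso (hS.δ i j hij) := by
  have := (hS.homology_exact₃ i j hij).mono_g hg
  have := (hS.homology_exact₁ i j hij).epi_f hf
  exact isIso_of_mono_of_epi _

namespace CategoryTheory.ProjectiveResolution

variable {R : Type u} [CommRing R] {Y : ModuleCat.{u} R} (P : ProjectiveResolution Y)

noncomputable def tensorLeft :
    ModuleCat.{u} R ⥤ HomologicalComplex (ModuleCat.{u} R) (ComplexShape.down ℕ) where
  obj X := (((tensoringLeft _).obj X).mapHomologicalComplex _).obj P.complex
  map φ := (NatTrans.mapHomologicalComplex ((tensoringLeft _).map φ) _).app P.complex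

instance : P.tensorLeft.Additive where
  map_add {_ _ _ _} := by
    ext i : 1
    exact MonoidalPreadditive.add_whiskerRight _ _

noncomputable def torIso (X : ModuleCat.{u} R) (n : ℕ) :
    ((Tor (ModuleCat.{u} R) n).obj X).obj Y ≅ (P.tensorLeft.obj X).homology n :=
  P.isoLeftDerivedObj ((tensoringLeft _).obj X) n

lemma shortExact_map_tensorLeft {S : ShortComplex (ModuleCat.{u} R)} (hS : S.ShortExact) :
    (S.map P.tensorLeft).ShortExact := by
  rw [HomologicalComplex.shortExact_iff_degreewise_shortExact]
  intro i
  have : Module.Flat R (P.complex.X i) :=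
    have := (IsProjective.iff_projective (P.complex.X i)).mpr (P.projective i)
    inferInstance
  exact hS.map_of_exact (tensorRight (P.complex.X i))

noncomputable def tensorLeftUnitIso : P.tensorLeft.obj (𝟙_ _) ≅ P.complex :=
  HomologicalComplex.Hom.isoOfComponents (fun i => λ_ (P.complex.X i))
    (fun _ _ _ => (leftUnitor_naturality _).symm)

lemma isZero_homology_tensorLeft_unit_succ (n : ℕ) :
    IsZero ((P.tensorLeft.obj (𝟙_ _)).homology (n + 1)) :=
  (P.complex_exactAt_succ n).isZero_homology.of_iso
    ((HomologicalComplex.homologyFunctor _ _ _).mapIso P.tensorLeftUnitIso)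

lemma tensorLeft_map_comp_π_eq_zero {X : ModuleCat.{u} R} (φ : X ⟶ 𝟙_ _)
    (hφ : ∀ x, φ x ∈ Module.annihilator R Y) :
    P.tensorLeft.map φ ≫ P.tensorLeftUnitIso.hom ≫ P.π = 0 := by
  refine HomologicalComplex.hom_ext _ _ fun i => ?_
  cases i with
  | zero =>
    rw [← cancel_mono (HomologicalComplex.singleObjXSelf (ComplexShape.down ℕ) 0 Y).hom]
    refine ModuleCat.hom_ext (TensorProduct.ext' fun x p => ?_)
    change (HomologicalComplex.singleObjXSelf (ComplexShape.down ℕ) 0 Y).hom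
      (P.π.f 0 (φ x • p)) = 0
    rw [map_smul, map_smul]
    exact Module.mem_annihilator.mp (hφ x) _
  | succ n =>
    exact (HomologicalComplex.isZero_single_obj_X _ 0 Y (n + 1) (by simp)).eq_of_tgt _ _

lemma homologyMap_tensorLeft_map_zero {X : ModuleCat.{u} R} (φ : X ⟶ 𝟙_ _)
    (hφ : ∀ x, φ x ∈ Module.annihilator R Y) :
    HomologicalComplex.homologyMap (P.tensorLeft.map φ) 0 = 0 := by
  have : IsIso (HomologicalComplex.homologyMap (P.tensorLeftUnitIso.hom ≫ P.π) 0) := by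
    rw [HomologicalComplex.homologyMap_comp]
    have := (quasiIsoAt_iff_isIso_homologyMap P.π 0).mp inferInstance
    infer_instance
  rw [← cancel_mono (HomologicalComplex.homologyMap (P.tensorLeftUnitIso.hom ≫ P.π) 0),
    ← HomologicalComplex.homologyMap_comp, P.tensorLeft_map_comp_π_eq_zero φ hφ,
    HomologicalComplex.homologyMap_zero, zero_comp]

lemma isIso_δ_tensorLeft {S : ShortComplex (ModuleCat.{u} R)} (hS : S.ShortExact)
    (hX₂ : ∀ n, IsZero ((P.tensorLeft.obj S.X₂).homology (n + 1)))
    (hf : HomologicalComplex.homologyMap (P.tensorLeft.map S.f) 0 = 0) (n : ℕ) :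
    IsIso ((P.shortExact_map_tensorLeft hS).δ (n + 1) n rfl) := by
  refine (P.shortExact_map_tensorLeft hS).isIso_δ_of_homologyMap_eq_zero _ _ _
    ((hX₂ n).eq_of_src _ _) ?_
  cases n with
  | zero => exact hf
  | succ m => exact (hX₂ m).eq_of_tgt _ _

end CategoryTheory.ProjectiveResolution

noncomputable def torZeroQuotientIso {R : Type u} [CommRing R] {Y : ModuleCat.{u} R}
    (I : Ideal R) (hI : I ≤ Module.annihilator R Y) :
    ((Tor (ModuleCat.{u} R) 0).obj (ModuleCat.of R (R ⧸ I))).obj Y ≅ Y :=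
  letI : PreservesFiniteColimits ((tensoringLeft _).obj (ModuleCat.of R (R ⧸ I))) :=
    inferInstanceAs (PreservesFiniteColimits (tensorLeft _))
  (Functor.leftDerivedZeroIsoSelf _).app Y ≪≫
    (TensorProduct.quotTensorEquivQuotSMul Y I ≪≫ₗ
      Submodule.quotEquivOfEqBot _ (by rwa [← Submodule.le_annihilator_iff,
        Submodule.annihilator_top])).toModuleIso

structure IsExactZeroDivisorPair {R : Type u} [CommRing R] (a b : R) : Prop where
  mul_eq_zero_iff_left : ∀ x, a * x = 0 ↔ x ∈ Ideal.span {b}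
  mul_eq_zero_iff_right : ∀ x, b * x = 0 ↔ x ∈ Ideal.span {a}

namespace IsExactZeroDivisorPair

variable {R : Type u} [CommRing R] {a b : R}

lemma symm (h : IsExactZeroDivisorPair a b) : IsExactZeroDivisorPair b a :=
  ⟨h.mul_eq_zero_iff_right, h.mul_eq_zero_iff_left⟩

noncomputable def mulQuotient (h : IsExactZeroDivisorPair a b) : R ⧸ Ideal.span {b} →ₗ[R] R :=
  (Ideal.span {b}).liftQ (LinearMap.mulLeft R a) fun x hx =>
    LinearMap.mem_ker.mpr ((h.mul_eq_zero_iff_left x).mpr hx)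

lemma range_mulQuotient (h : IsExactZeroDivisorPair a b) :
    LinearMap.range h.mulQuotient = Ideal.span {a} := by
  ext x
  simp [mulQuotient, Submodule.range_liftQ, Ideal.mem_span_singleton', mul_comm]

lemma injective_mulQuotient (h : IsExactZeroDivisorPair a b) :
    Function.Injective h.mulQuotient := by
  refine LinearMap.ker_eq_bot.mp (Submodule.ker_liftQ_eq_bot' _ _ ?_)
  ext x
  exact (h.mul_eq_zero_iff_left x).symm

noncomputable def shortComplex (h : IsExactZeroDivisorPair a b) :
    ShortComplex (ModuleCat.{u} R) :=
  ModuleCat.shortComplexOfCompEqZero h.mulQuotient (Ideal.span {a}).mkQ <| by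
    rw [← LinearMap.range_le_ker_iff, range_mulQuotient, Submodule.ker_mkQ]

lemma shortExact_shortComplex (h : IsExactZeroDivisorPair a b) : h.shortComplex.ShortExact :=
  ModuleCat.shortComplex_shortExact _
    (LinearMap.exact_iff.mpr <| by
      change LinearMap.ker (Ideal.span {a}).mkQ = LinearMap.range h.mulQuotient
      rw [Submodule.ker_mkQ, h.range_mulQuotient])
    h.injective_mulQuotient (Submodule.mkQ_surjective _)

variable {Y : ModuleCat.{u} R}

noncomputable def torSuccIso (h : IsExactZeroDivisorPair a b) (ha : a ∈ Module.annihilator R Y)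
    (n : ℕ) :
    ((Tor (ModuleCat.{u} R) (n + 1)).obj (ModuleCat.of R (R ⧸ Ideal.span {a}))).obj Y ≅
      ((Tor (ModuleCat.{u} R) n).obj (ModuleCat.of R (R ⧸ Ideal.span {b}))).obj Y :=
  let P := projectiveResolution Y
  have hf : ∀ x, h.shortComplex.f x ∈ Module.annihilator R Y := fun x =>
    (Ideal.span_singleton_le_iff_mem _).mpr ha
      (h.range_mulQuotient ▸ LinearMap.mem_range_self h.mulQuotient x)
  P.torIso _ (n + 1) ≪≫
    @asIso _ _ _ _ _ (P.isIso_δ_tensorLeft h.shortExact_shortComplex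
      P.isZero_homology_tensorLeft_unit_succ (P.homologyMap_tensorLeft_map_zero _ hf) n) ≪≫
    (P.torIso _ n).symm

theorem nonempty_tor_iso (h : IsExactZeroDivisorPair a b) (ha : a ∈ Module.annihilator R Y)
    (hb : b ∈ Module.annihilator R Y) (n : ℕ) :
    Nonempty (((Tor (ModuleCat.{u} R) n).obj (ModuleCat.of R (R ⧸ Ideal.span {a}))).obj Y ≅ Y) := by
  induction n generalizing a b with
  | zero => exact ⟨torZeroQuotientIso _ ((Ideal.span_singleton_le_iff_mem _).mpr ha)⟩
  | succ n ih => exact (ih h.symm hb ha).map (h.torSuccIso ha n ≪≫ ·)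

end IsExactZeroDivisorPair

lemma RingTheory.Sequence.IsWeaklyRegular.isSMulRegular_quotient_of_append_singleton
    {R : Type*} [CommRing R] {rs : List R} {x : R} (h : IsWeaklyRegular R (rs ++ [x])) :
    IsSMulRegular (R ⧸ Ideal.ofList rs) x := by
  have := ((isWeaklyRegular_append_iff R rs [x]).mp h).2
  rwa [isWeaklyRegular_singleton_iff, smul_eq_mul, Ideal.mul_top] at this

section PowerQuotient

variable {Q A : Type*} [CommRing Q] [CommRing A] {q : Q →+* A} {I : Ideal Q} {g : Q} {r : ℕ}

lemma pow_mul_eq_zero_iff_mem_span (hq : Function.Surjective q)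
    (hker : RingHom.ker q = I ⊔ Ideal.span {g ^ r}) (hg : IsSMulRegular (Q ⧸ I) g)
    {t : ℕ} (ht : t ≤ r) (x : A) : q g ^ t * x = 0 ↔ x ∈ Ideal.span {q g ^ (r - t)} := by
  have hgr : g ^ t * g ^ (r - t) = g ^ r := by rw [← pow_add, Nat.add_sub_cancel' ht]
  constructor
  · obtain ⟨y, rfl⟩ := hq x
    intro hy
    rw [← map_pow, ← map_mul, ← RingHom.mem_ker, hker, Submodule.mem_sup] at hy
    obtain ⟨i, hi, _, hw, hiw⟩ := hy
    obtain ⟨w, rfl⟩ := Ideal.mem_span_singleton'.mp hw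
    have hI : y - w * g ^ (r - t) ∈ I := by
      rw [← Ideal.Quotient.eq_zero_iff_mem]
      refine (hg.pow t).right_eq_zero_of_smul ?_
      rw [Algebra.smul_def, Ideal.Quotient.algebraMap_eq, ← map_mul, Ideal.Quotient.eq_zero_iff_mem]
      convert hi using 1
      linear_combination -hiw - w * hgr
    have hker' : y - w * g ^ (r - t) ∈ RingHom.ker q := hker ▸ Ideal.mem_sup_left hI
    rw [RingHom.mem_ker, map_sub, sub_eq_zero] at hker'
    rw [hker', map_mul, map_pow]
    exact Ideal.mul_mem_left _ _ (Ideal.mem_span_singleton_self _)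
  · intro hx
    obtain ⟨c, rfl⟩ := Ideal.mem_span_singleton'.mp hx
    have : g ^ r ∈ RingHom.ker q := hker ▸ Ideal.mem_sup_right (Ideal.mem_span_singleton_self _)
    rw [RingHom.mem_ker, ← hgr, map_mul, map_pow, map_pow] at this
    linear_combination c * this

lemma isExactZeroDivisorPair_pow (hq : Function.Surjective q)
    (hker : RingHom.ker q = I ⊔ Ideal.span {g ^ r}) (hg : IsSMulRegular (Q ⧸ I) g)
    {t : ℕ} (ht : t ≤ r) : IsExactZeroDivisorPair (q g ^ t) (q g ^ (r - t)) where
  mul_eq_zero_iff_left := pow_mul_eq_zero_iff_mem_span hq hker hg ht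
  mul_eq_zero_iff_right := by
    simpa only [Nat.sub_sub_self ht] using pow_mul_eq_zero_iff_mem_span hq hker hg (Nat.sub_le r t)

end PowerQuotient

theorem stmt_14_general
    (Q : Type) [CommRing Q] [IsLocalRing Q]
    (c : ℕ)
    (f : Fin (c - 1) → Q) (g : Q)
    (hf2 : ∀ i, f i ∈ IsLocalRing.maximalIdeal Q ^ 2)
    (hg : g ∈ IsLocalRing.maximalIdeal Q)
    (hfreg : RingTheory.Sequence.IsRegular Q (List.ofFn f ++ [g]))
    (r : ℕ)
    (A : Type) [CommRing A]
    (q : Q →+* A) (hq : Function.Surjective q)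
    (hker : RingHom.ker q = Ideal.span (insert (g ^ r) (Set.range f)))
    (s : ℕ) (hs1 : 1 ≤ s) (hs2 : s ≤ r - 1) (l : ℕ) :
    moduleLength A
      (((Tor (ModuleCat A) l).obj (ModuleCat.of A (A ⧸ Ideal.span {q g ^ s}))).obj
        (ModuleCat.of A (A ⧸ Ideal.map q (IsLocalRing.maximalIdeal Q)))) = 1 := by
  set 𝔫 := IsLocalRing.maximalIdeal Q
  have hreg : IsSMulRegular (Q ⧸ Ideal.span (Set.range f)) g := by
    have := hfreg.toIsWeaklyRegular.isSMulRegular_quotient_of_append_singleton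
    rwa [Ideal.ofList, show {x | x ∈ List.ofFn f} = Set.range f from
      Set.ext fun _ => List.mem_ofFn] at this
  have hexact : IsExactZeroDivisorPair (q g ^ s) (q g ^ (r - s)) :=
    isExactZeroDivisorPair_pow hq (by rw [hker, Ideal.span_insert, sup_comm]) hreg (by omega)
  have hmax : (𝔫.map q).IsMaximal := by
    refine .map_of_surjective_of_ker_le hq (hker ▸ Ideal.span_le.mpr ?_)
    rintro x (rfl | ⟨i, rfl⟩)
    · exact Ideal.pow_mem_of_mem _ hg r (by omega)
    · exact Ideal.pow_le_self two_ne_zero (hf2 i)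
  have hann (t : ℕ) (ht : 1 ≤ t) : q g ^ t ∈ Module.annihilator A (A ⧸ 𝔫.map q) := by
    rw [Ideal.annihilator_quotient]
    exact Ideal.pow_mem_of_mem _ (Ideal.mem_map_of_mem q hg) t ht
  obtain ⟨e⟩ := hexact.nonempty_tor_iso (Y := .of A (A ⧸ 𝔫.map q)) (hann s hs1)
    (hann (r - s) (by omega)) l
  have : IsSimpleModule A (A ⧸ 𝔫.map q) := isSimpleModule_iff_isCoatom.mpr hmax.out
  rw [moduleLength_eq_length, e.toLinearEquiv.length_eq, Module.length_eq_one]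

/-- With `Q` a regular local ring of dimension `c ≥ 2` with algebraically
closed residue field, `f₁,…,f_{c-1}, g` a `Q`-regular sequence with `f i ∈ 𝔫²` and `g ∈ 𝔫`,
and `A = Q/(f₁,…,f_{c-1}, g^r)` (`r ≥ 2`, presented via the surjection `q`):  for every
`1 ≤ s ≤ r - 1` and every `l ≥ 0`, `Tor_l^A(A/(g^s A), k)` is a one-dimensional vector space
over the residue field `k = A/𝔫A` of `A`, i.e. it has length one as an `A`-module; so all
Betti numbers of `A/(g^s A)` equal `1`. -/
theorem stmt_14
    (Q : Type) [CommRing Q] [IsLocalRing Q] [IsNoetherianRing Q]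
    [IsAlgClosed (IsLocalRing.ResidueField Q)]
    (c : ℕ) (hc : 2 ≤ c)
    (hdim : ringKrullDim Q = c)
    (hregular : ∃ s : Finset Q, s.card = c ∧
      Ideal.span (s : Set Q) = IsLocalRing.maximalIdeal Q)
    (f : Fin (c - 1) → Q) (g : Q)
    (hf2 : ∀ i, f i ∈ IsLocalRing.maximalIdeal Q ^ 2)
    (hg : g ∈ IsLocalRing.maximalIdeal Q)
    (hfreg : RingTheory.Sequence.IsRegular Q (List.ofFn f ++ [g]))
    (r : ℕ) (hr : 2 ≤ r)
    (A : Type) [CommRing A]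
    (q : Q →+* A) (hq : Function.Surjective q)
    (hker : RingHom.ker q = Ideal.span (insert (g ^ r) (Set.range f)))
    (s : ℕ) (hs1 : 1 ≤ s) (hs2 : s ≤ r - 1) (l : ℕ) :
    moduleLength A
      (((Tor (ModuleCat A) l).obj (ModuleCat.of A (A ⧸ Ideal.span {q g ^ s}))).obj
        (ModuleCat.of A (A ⧸ Ideal.map q (IsLocalRing.maximalIdeal Q)))) = 1 :=
  stmt_14_general Q c f g hf2 hg hfreg r A q hq hker s hs1 hs2 l
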